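/- The rarefaction fan is a weak solution: let G(u) = 2u(1−u)(2u−1), H(u) = 1 − 12(u − 1/2)², and let λ, ρ ∈ [0, 1/2] with λ ≤ ρ. Define u : ℝ × [0,∞) → ℝ by: u(x,0) = u₀(x), where u₀(x) = λ if x < 0 and u₀(x) = ρ if x ≥ 0; and for t > 0, u(x,t) = λ if x ≤ H(λ)·t, u(x,t) = 1/2 − √((1 − x/t)/12) if H(λ)·t < x < H(ρ)·t, and u(x,t) = ρ if x ≥ H(ρ)·t. Then u is a weak solution of ∂_t u + ∂_x G(u) = 0 with initial datum u₀: for every continuously differentiable φ : ℝ × ℝ → ℝ with compact support, ∫_0^∞ ∫_ℝ ( u(x,t) ∂_t φ(x,t) + G(u(x,t)) ∂_x φ(x,t) ) dx dt + ∫_ℝ u₀(x) φ(x,0) dx = 0. -/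

import Mathlib

/-!
For `t > 0` the fan is self-similar, `u(x,t) = v(x/t)`, and its potential
`W(s) = s v(s) - G(v(s))` satisfies `W' = v` away from the two edges of the fan (on the fan itself
because `H(v(s)) = s`). Writing `I(t) = ∫ u(x,t) φ(x,t) dx = t ∫ v(s) φ(ts,t) ds`, differentiation
under the integral sign followed by an integration by parts against `W` gives
`I'(t) = ∫ (u ∂ₜφ + G(u) ∂ₓφ) dx`. The space-time integral is therefore `∫₀^∞ I' = -I(0⁺)`, and
`I(0⁺) = ∫ u₀ φ(x,0) dx` by dominated convergence, because `v(x/t) → u₀(x)` for every `x ≠ 0`.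
-/

open MeasureTheory

/-- The DEP macroscopic flux `G(u) = 2u(1-u)(2u-1)`. -/
def depG (u : ℝ) : ℝ := 2 * u * (1 - u) * (2 * u - 1)

/-- The characteristic speed `H(u) = G'(u) = 1 - 12(u - 1/2)²`. -/
noncomputable def depH (u : ℝ) : ℝ := 1 - 12 * (u - 1 / 2) ^ 2

open Filter Topology Set Function Metric

theorem integral_eq_mul_integral_comp_mul_left {t : ℝ} (ht : 0 < t) (g : ℝ → ℝ) :
    ∫ x, g x = t * ∫ s, g (t * s) := by
  rw [Measure.integral_comp_mul_left, abs_of_pos (inv_pos.mpr ht), smul_eq_mul,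
    mul_inv_cancel_left₀ ht.ne']

theorem norm_mul_le_indicator_closedBall {a b : ℝ → ℝ} {C K R : ℝ} (ha : ∀ x, ‖a x‖ ≤ C)
    (hb : ∀ x, ‖b x‖ ≤ K) (hbR : ∀ x, R < |x| → b x = 0) (x : ℝ) :
    ‖a x * b x‖ ≤ (closedBall 0 R).indicator (fun _ => C * K) x := by
  by_cases hx : x ∈ closedBall 0 R
  · rw [indicator_of_mem hx, norm_mul]
    exact mul_le_mul (ha x) (hb x) (norm_nonneg _) ((norm_nonneg _).trans (ha x))
  · rw [indicator_of_notMem hx, hbR x (by simpa using hx), mul_zero, norm_zero]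

theorem integrable_indicator_closedBall_const (R c : ℝ) :
    Integrable ((closedBall (0 : ℝ) R).indicator fun _ => c) :=
  (integrable_indicator_iff measurableSet_closedBall).2
    (integrableOn_const measure_closedBall_lt_top.ne)

theorem integrableOn_Ioi_of_hasDerivAt_of_norm_le {I F : ℝ → ℝ} {a b B : ℝ}
    (hI : ∀ t ∈ Ioi a, HasDerivAt I (F t) t) (hFB : ∀ t ∈ Ioi a, ‖F t‖ ≤ B)
    (hF0 : ∀ t, b < t → F t = 0) : IntegrableOn F (Ioi a) := by
  have hmeas : AEStronglyMeasurable F (volume.restrict (Ioi a)) :=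
    (aestronglyMeasurable_deriv I _).congr
      ((ae_restrict_mem measurableSet_Ioi).mono fun t ht => (hI t ht).deriv)
  refine Integrable.mono' ((integrable_indicator_iff measurableSet_Ioc).2
    (integrableOn_const (s := Ioc a b) measure_Ioc_lt_top.ne (C := B))).restrict hmeas
    (ae_restrict_of_forall_mem measurableSet_Ioi fun t ht => ?_)
  by_cases htb : t ≤ b
  · rw [indicator_of_mem (show t ∈ Ioc a b from ⟨ht, htb⟩)]
    exact hFB t ht
  · rw [hF0 t (not_le.mp htb), norm_zero, indicator_of_notMem fun h => htb h.2]

theorem integral_mul_add_mul_deriv_eq_zero {v W ψ ψ' : ℝ → ℝ} {S : Set ℝ} (hS : S.Countable)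
    (hv : Continuous v) (hW : Continuous W) (hWv : ∀ s ∉ S, HasDerivAt W (v s) s)
    (hψ : ∀ s, HasDerivAt ψ (ψ' s) s) (hψ' : Continuous ψ') (hψc : HasCompactSupport ψ) :
    ∫ s, (v s * ψ s + W s * ψ' s) = 0 := by
  obtain ⟨r, hr0, hr⟩ := hψc.isCompact.isBounded.subset_closedBall_lt 0 0
  have hout : ∀ s, r < |s| → ψ s = 0 ∧ ψ' s = 0 := by
    intro s hs
    have hs' : s ∉ tsupport ψ := fun h => by simpa [not_le.mpr hs] using hr h
    refine ⟨image_eq_zero_of_notMem_tsupport hs', ?_⟩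
    rw [← (hψ s).deriv]
    exact notMem_support.mp fun h => hs' (support_deriv_subset h)
  have hψ0 : Continuous ψ := continuous_iff_continuousAt.mpr fun s => (hψ s).continuousAt
  have hFTC := integral_eq_of_hasDerivAt_off_countable_of_le (fun s => W s * ψ s)
    (fun s => v s * ψ s + W s * ψ' s)
    (by linarith : -(r + 1) ≤ r + 1) hS (hW.mul hψ0).continuousOn
    (fun s hs => ((hWv s hs.2).mul (hψ s)).congr_deriv (by ring))
    (((hv.mul hψ0).add (hW.mul hψ')).intervalIntegrable _ _)
  rw [intervalIntegral.integral_of_le (by linarith),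
    setIntegral_eq_integral_of_forall_compl_eq_zero fun s hs => ?_] at hFTC
  · rw [hFTC, (hout _ (lt_abs.2 (Or.inl (by linarith)))).1,
      (hout _ (lt_abs.2 (Or.inr (by linarith)))).1, mul_zero, mul_zero, sub_zero]
  · rw [mem_Ioc, not_and_or, not_lt, not_le] at hs
    obtain ⟨h1, h2⟩ := hout s (lt_abs.2 (by rcases hs with hs | hs <;> [right; left] <;> linarith))
    rw [h1, h2, mul_zero, mul_zero, add_zero]

section TestFunction

variable {φ : ℝ → ℝ → ℝ}

theorem deriv_fst_eq_fderiv {x t : ℝ} (hφ : DifferentiableAt ℝ (uncurry φ) (x, t)) :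
    deriv (fun y => φ y t) x = fderiv ℝ (uncurry φ) (x, t) (1, 0) := by
  have h := hφ.hasFDerivAt.comp_hasDerivAt x ((hasDerivAt_id x).prodMk (hasDerivAt_const x t))
  exact h.deriv

theorem deriv_snd_eq_fderiv {x t : ℝ} (hφ : DifferentiableAt ℝ (uncurry φ) (x, t)) :
    deriv (fun s => φ x s) t = fderiv ℝ (uncurry φ) (x, t) (0, 1) := by
  have h := hφ.hasFDerivAt.comp_hasDerivAt t ((hasDerivAt_const t x).prodMk (hasDerivAt_id t))
  exact h.deriv

theorem DifferentiableAt.hasDerivAt_comp₂ {f g : ℝ → ℝ} {f' g' r : ℝ}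
    (hφ : DifferentiableAt ℝ (uncurry φ) (f r, g r)) (hf : HasDerivAt f f' r)
    (hg : HasDerivAt g g' r) :
    HasDerivAt (fun r => φ (f r) (g r))
      (f' * deriv (fun y => φ y (g r)) (f r) + g' * deriv (fun s => φ (f r) s) (g r)) r := by
  have hv : ((f', g') : ℝ × ℝ) = f' • ((1 : ℝ), (0 : ℝ)) + g' • ((0 : ℝ), (1 : ℝ)) := by simp
  have h := hφ.hasFDerivAt.comp_hasDerivAt r (hf.prodMk hg)
  rw [hv, map_add, map_smul, map_smul, smul_eq_mul, smul_eq_mul, ← deriv_fst_eq_fderiv hφ,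
    ← deriv_snd_eq_fderiv hφ] at h
  exact h

theorem deriv_mul_apply_mul_self (hφ : Differentiable ℝ (uncurry φ)) {s t : ℝ} :
    deriv (fun t => t * φ (t * s) t) t =
      φ (t * s) t + t * (s * deriv (fun y => φ y t) (t * s) + deriv (fun r => φ (t * s) r) t) :=
  ((hasDerivAt_id t).mul ((hφ _).hasDerivAt_comp₂ ((hasDerivAt_id t).mul_const s)
    (hasDerivAt_id t))).deriv.trans (by simp)

theorem continuous_deriv_fst (hφ : ContDiff ℝ 1 (uncurry φ)) :
    Continuous fun p : ℝ × ℝ => deriv (fun y => φ y p.2) p.1 := by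
  simp_rw [deriv_fst_eq_fderiv (hφ.differentiable one_ne_zero _)]
  exact (hφ.continuous_fderiv one_ne_zero).clm_apply continuous_const

theorem continuous_deriv_snd (hφ : ContDiff ℝ 1 (uncurry φ)) :
    Continuous fun p : ℝ × ℝ => deriv (fun s => φ p.1 s) p.2 := by
  simp_rw [deriv_snd_eq_fderiv (hφ.differentiable one_ne_zero _)]
  exact (hφ.continuous_fderiv one_ne_zero).clm_apply continuous_const

theorem hasCompactSupport_deriv_fst (hφ : ContDiff ℝ 1 (uncurry φ))
    (hφc : HasCompactSupport (uncurry φ)) :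
    HasCompactSupport fun p : ℝ × ℝ => deriv (fun y => φ y p.2) p.1 := by
  simp_rw [deriv_fst_eq_fderiv (hφ.differentiable one_ne_zero _)]
  exact hφc.fderiv_apply ℝ (1, 0)

theorem hasCompactSupport_deriv_snd (hφ : ContDiff ℝ 1 (uncurry φ))
    (hφc : HasCompactSupport (uncurry φ)) :
    HasCompactSupport fun p : ℝ × ℝ => deriv (fun s => φ p.1 s) p.2 := by
  simp_rw [deriv_snd_eq_fderiv (hφ.differentiable one_ne_zero _)]
  exact hφc.fderiv_apply ℝ (0, 1)

theorem HasCompactSupport.exists_forall_eq_zero_deriv_eq_zero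
    (hφc : HasCompactSupport (uncurry φ)) :
    ∃ R > 0, ∀ x t, R < |x| ∨ R < |t| →
      φ x t = 0 ∧ deriv (fun y => φ y t) x = 0 ∧ deriv (fun s => φ x s) t = 0 := by
  obtain ⟨R, hR, hφR⟩ := hφc.exists_pos_le_norm
  set O : Set (ℝ × ℝ) := {p | R < |p.1| ∨ R < |p.2|}
  have hO : IsOpen O := (isOpen_lt continuous_const continuous_fst.abs).union
    (isOpen_lt continuous_const continuous_snd.abs)
  have hzero : ∀ p ∈ O, uncurry φ p = 0 := fun p hp => hφR p <| by
    rcases hp with hp | hp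
    · exact hp.le.trans (le_max_left _ _)
    · exact hp.le.trans (le_max_right _ _)
  refine ⟨R, hR, fun x t hxt => ⟨hzero (x, t) hxt, ?_, ?_⟩⟩
  · have : (fun y => φ y t) =ᶠ[𝓝 x] 0 := Filter.mem_of_superset
      ((hO.preimage (continuous_id.prodMk continuous_const)).mem_nhds hxt)
      fun y hy => hzero (y, t) hy
    simpa using this.deriv_eq
  · have : (fun s => φ x s) =ᶠ[𝓝 t] 0 := Filter.mem_of_superset
      ((hO.preimage (continuous_const.prodMk continuous_id)).mem_nhds hxt)
      fun s hs => hzero (x, s) hs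
    simpa using this.deriv_eq

end TestFunction

theorem hasDerivAt_integral_mul_of_eq_zero_of_notMem {v : ℝ → ℝ} {f : ℝ → ℝ → ℝ} {U K : Set ℝ}
    {t₀ : ℝ} (hv : Continuous v) (hf : ContDiff ℝ 1 (uncurry f)) (hU : IsOpen U) (ht₀ : t₀ ∈ U)
    (hK : IsCompact K) (hfK : ∀ t ∈ U, ∀ s ∉ K, f t s = 0) :
    HasDerivAt (fun t => ∫ s, v s * f t s) (∫ s, v s * deriv (fun t => f t s) t₀) t₀ := by
  obtain ⟨δ, hδ, hδU⟩ := Metric.isOpen_iff.mp hU t₀ ht₀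
  have hf' : Continuous fun p : ℝ × ℝ => deriv (fun t => f t p.2) p.1 := continuous_deriv_fst hf
  have hf'K : ∀ t ∈ U, ∀ s ∉ K, deriv (fun t => f t s) t = 0 := fun t ht s hs => by
    have : (fun t => f t s) =ᶠ[𝓝 t] 0 :=
      Filter.mem_of_superset (hU.mem_nhds ht) fun t' ht' => hfK t' ht' s hs
    simpa using this.deriv_eq
  obtain ⟨B, hB⟩ := ((isCompact_closedBall t₀ (δ / 2)).prod hK).exists_bound_of_continuousOn
    ((hv.comp continuous_snd).mul hf').continuousOn
  have hbound : ∀ s, ∀ t ∈ ball t₀ (δ / 2),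
      ‖v s * deriv (fun t => f t s) t‖ ≤ K.indicator (fun _ => B) s := by
    intro s t ht
    by_cases hs : s ∈ K
    · rw [indicator_of_mem hs]
      exact hB (t, s) ⟨ball_subset_closedBall ht, hs⟩
    · rw [indicator_of_notMem hs,
        hf'K t (hδU (ball_subset_ball (by linarith) ht)) s hs, mul_zero, norm_zero]
  have hderiv : ∀ s t, HasDerivAt (fun t => v s * f t s) (v s * deriv (fun t => f t s) t) t := by
    intro s t
    have h := (hf.differentiable one_ne_zero (t, s)).comp t
      ((hasDerivAt_id t).prodMk (hasDerivAt_const t s)).differentiableAt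
    exact h.hasDerivAt.const_mul (v s)
  have hint : Integrable fun s => v s * f t₀ s :=
    (hv.mul (hf.continuous.uncurry_left t₀)).integrable_of_hasCompactSupport
      (HasCompactSupport.intro hK fun s hs => by simp [hfK t₀ ht₀ s hs])
  exact (hasDerivAt_integral_of_dominated_loc_of_deriv_le (ball_mem_nhds t₀ (half_pos hδ))
    (Eventually.of_forall fun t => (hv.mul (hf.continuous.uncurry_left t)).aestronglyMeasurable)
    hint (hv.mul (hf'.comp₂ continuous_const continuous_id)).aestronglyMeasurable
    (ae_of_all _ hbound)
    ((integrable_indicator_iff hK.measurableSet).2 (integrableOn_const hK.measure_lt_top.ne))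
    (ae_of_all _ fun s t _ => hderiv s t)).2

def IsWeakSolution (G : ℝ → ℝ) (u : ℝ → ℝ → ℝ) (u₀ : ℝ → ℝ) : Prop :=
  ∀ φ : ℝ → ℝ → ℝ, ContDiff ℝ 1 (uncurry φ) → HasCompactSupport (uncurry φ) →
    (∫ t in Ioi (0 : ℝ), ∫ x : ℝ,
        (u x t * deriv (fun s => φ x s) t + G (u x t) * deriv (fun y => φ y t) x))
      + (∫ x : ℝ, u₀ x * φ x 0) = 0

section SelfSimilar

variable {G v : ℝ → ℝ} {φ : ℝ → ℝ → ℝ}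

theorem integral_mul_deriv_rescaled_eq_integral_flux {S : Set ℝ} (hG : Continuous G)
    (hv : Continuous v) (hS : S.Countable)
    (hW : ∀ s ∉ S, HasDerivAt (fun s => s * v s - G (v s)) (v s) s)
    (hφ : ContDiff ℝ 1 (uncurry φ)) (hφc : HasCompactSupport (uncurry φ)) {t : ℝ} (ht : 0 < t) :
    ∫ s, v s * deriv (fun t => t * φ (t * s) t) t =
      ∫ x, (v (x / t) * deriv (fun s => φ x s) t + G (v (x / t)) * deriv (fun y => φ y t) x) := by
  obtain ⟨R, -, hφR⟩ := hφc.exists_forall_eq_zero_deriv_eq_zero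
  have hφd : ∀ p, DifferentiableAt ℝ (uncurry φ) p := hφ.differentiable one_ne_zero
  have hvan : ∀ s, R / t < |s| → φ (t * s) t = 0 ∧ deriv (fun y => φ y t) (t * s) = 0 ∧
      deriv (fun r => φ (t * s) r) t = 0 := fun s hs => hφR _ _ <| Or.inl <| by
    rwa [abs_mul, abs_of_pos ht, ← div_lt_iff₀' ht]
  have hsupp : ∀ g : ℝ → ℝ, (∀ s, R / t < |s| → g s = 0) → HasCompactSupport g := fun g hg =>
    HasCompactSupport.intro (isCompact_closedBall 0 (R / t)) fun s hs => hg s (by simpa using hs)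
  have hpath : Continuous fun s => t * s := continuous_const.mul continuous_id
  have hφx : Continuous fun s => deriv (fun y => φ y t) (t * s) :=
    (continuous_deriv_fst hφ).comp₂ hpath continuous_const
  have hφt : Continuous fun s => deriv (fun r => φ (t * s) r) t :=
    (continuous_deriv_snd hφ).comp₂ hpath continuous_const
  have hW' : Continuous fun s => s * v s - G (v s) := (continuous_id.mul hv).sub (hG.comp hv)
  set ψ : ℝ → ℝ := fun s => φ (t * s) t
  set ψ' : ℝ → ℝ := fun s => t * deriv (fun y => φ y t) (t * s)
  have hψ : ∀ s, HasDerivAt ψ (ψ' s) s := fun s =>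
    ((hφd _).hasDerivAt_comp₂ ((hasDerivAt_id s).const_mul t) (hasDerivAt_const s t)).congr_deriv
      (by simp [ψ'])
  have hibp := integral_mul_add_mul_deriv_eq_zero hS hv hW' hW hψ (continuous_const.mul hφx)
    (hsupp ψ fun s hs => (hvan s hs).1)
  set flux : ℝ → ℝ := fun s => t * (v s * deriv (fun r => φ (t * s) r) t
    + G (v s) * deriv (fun y => φ y t) (t * s))
  have hflux : Integrable flux :=
    (continuous_const.mul ((hv.mul hφt).add ((hG.comp hv).mul hφx))).integrable_of_hasCompactSupport
      (hsupp _ fun s hs => by simp [(hvan s hs).2.1, (hvan s hs).2.2])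
  have hibp_int : Integrable fun s => v s * ψ s + (s * v s - G (v s)) * ψ' s :=
    ((hv.mul (hφ.continuous.comp₂ hpath continuous_const)).add
      (hW'.mul (continuous_const.mul hφx))).integrable_of_hasCompactSupport
      (hsupp _ fun s hs => by simp [(hvan s hs).1, (hvan s hs).2.1])
  calc ∫ s, v s * deriv (fun t => t * φ (t * s) t) t
      = ∫ s, (flux s + (v s * ψ s + (s * v s - G (v s)) * ψ' s)) :=
        integral_congr_ae <| ae_of_all _ fun s => by
          simp only [deriv_mul_apply_mul_self hφd, flux, ψ, ψ']
          ring
    _ = ∫ s, flux s := by rw [integral_add hflux hibp_int, hibp, add_zero]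
    _ = _ := by
        rw [integral_eq_mul_integral_comp_mul_left ht (fun x => _ * _ + _), ← integral_const_mul]
        simp_rw [flux, mul_div_cancel_left₀ _ ht.ne']

theorem hasDerivAt_integral_comp_div_mul {S : Set ℝ} (hG : Continuous G) (hv : Continuous v)
    (hS : S.Countable) (hW : ∀ s ∉ S, HasDerivAt (fun s => s * v s - G (v s)) (v s) s)
    (hφ : ContDiff ℝ 1 (uncurry φ)) (hφc : HasCompactSupport (uncurry φ)) {t : ℝ} (ht : 0 < t) :
    HasDerivAt (fun t => ∫ x, v (x / t) * φ x t)
      (∫ x, (v (x / t) * deriv (fun s => φ x s) t + G (v (x / t)) * deriv (fun y => φ y t) x))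
      t := by
  obtain ⟨R, hR, hφR⟩ := hφc.exists_forall_eq_zero_deriv_eq_zero
  have hsupp : ∀ t' ∈ Ioi (t / 2), ∀ s ∉ closedBall 0 (2 * R / t), t' * φ (t' * s) t' = 0 := by
    intro t' ht' s hs
    rw [mem_closedBall_zero_iff, Real.norm_eq_abs, not_le] at hs
    have hts : R < |t' * s| := by
      rw [abs_mul, abs_of_pos ((half_pos ht).trans ht')]
      calc R = t / 2 * (2 * R / t) := by field_simp
        _ < t' * |s| := mul_lt_mul'' ht' hs (half_pos ht).le (by positivity)
    rw [(hφR _ _ (Or.inl hts)).1, mul_zero]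
  have hJ := hasDerivAt_integral_mul_of_eq_zero_of_notMem (f := fun t s => t * φ (t * s) t) hv
    (contDiff_fst.mul (hφ.comp ((contDiff_fst.mul contDiff_snd).prodMk contDiff_fst)))
    isOpen_Ioi (half_lt_self ht) (isCompact_closedBall 0 _) hsupp
  rw [integral_mul_deriv_rescaled_eq_integral_flux hG hv hS hW hφ hφc ht] at hJ
  refine hJ.congr_of_eventuallyEq (eventually_of_mem (Ioi_mem_nhds ht) fun t' (ht' : 0 < t') => ?_)
  beta_reduce
  rw [integral_eq_mul_integral_comp_mul_left ht', ← integral_const_mul]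
  simp_rw [mul_div_cancel_left₀ _ ht'.ne', mul_left_comm]

theorem tendsto_comp_div_nhdsGT_zero {vl vr : ℝ} (hvl : Tendsto v atBot (𝓝 vl))
    (hvr : Tendsto v atTop (𝓝 vr)) {x : ℝ} (hx : x ≠ 0) :
    Tendsto (fun t => v (x / t)) (𝓝[>] 0) (𝓝 (if x < 0 then vl else vr)) := by
  simp_rw [div_eq_mul_inv]
  rcases hx.lt_or_gt with hx | hx
  · rw [if_pos hx]
    exact hvl.comp (tendsto_inv_nhdsGT_zero.const_mul_atTop_of_neg hx)
  · rw [if_neg hx.not_gt]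
    exact hvr.comp (tendsto_inv_nhdsGT_zero.const_mul_atTop hx)

theorem tendsto_integral_comp_div_mul_nhdsGT_zero {vl vr C : ℝ} (hv : Continuous v)
    (hvC : ∀ s, ‖v s‖ ≤ C) (hvl : Tendsto v atBot (𝓝 vl)) (hvr : Tendsto v atTop (𝓝 vr))
    (hφ : Continuous (uncurry φ)) (hφc : HasCompactSupport (uncurry φ)) :
    Tendsto (fun t => ∫ x, v (x / t) * φ x t) (𝓝[>] 0)
      (𝓝 (∫ x, (if x < 0 then vl else vr) * φ x 0)) := by
  obtain ⟨R, -, hφR⟩ := hφc.exists_forall_eq_zero_deriv_eq_zero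
  obtain ⟨K, hK⟩ := hφ.bounded_above_of_compact_support hφc
  refine tendsto_integral_filter_of_dominated_convergence _
    (Eventually.of_forall fun t =>
      ((hv.comp (continuous_id.div_const t)).mul (hφ.uncurry_right t)).aestronglyMeasurable)
    (Eventually.of_forall fun t => ae_of_all _ fun x =>
      norm_mul_le_indicator_closedBall (fun x => hvC (x / t)) (fun x => hK (x, t))
        (fun x hx => (hφR x t (Or.inl hx)).1) x)
    (integrable_indicator_closedBall_const R (C * K))
    ((Measure.ae_ne volume 0).mono fun x hx => (tendsto_comp_div_nhdsGT_zero hvl hvr hx).mul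
      (((hφ.uncurry_left x).tendsto 0).mono_left nhdsWithin_le_nhds))

theorem isWeakSolution_of_selfSimilar {S : Set ℝ} {vl vr C : ℝ} {u : ℝ → ℝ → ℝ} {u₀ : ℝ → ℝ}
    (hG : Continuous G) (hv : Continuous v) (hvC : ∀ s, ‖v s‖ ≤ C) (hGvC : ∀ s, ‖G (v s)‖ ≤ C)
    (hS : S.Countable) (hW : ∀ s ∉ S, HasDerivAt (fun s => s * v s - G (v s)) (v s) s)
    (hvl : Tendsto v atBot (𝓝 vl)) (hvr : Tendsto v atTop (𝓝 vr))
    (hu₀ : ∀ x, u₀ x = if x < 0 then vl else vr) (hu0 : ∀ x, u x 0 = u₀ x)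
    (hu : ∀ x t, 0 < t → u x t = v (x / t)) :
    IsWeakSolution G u u₀ := by
  intro φ hφ hφc
  obtain ⟨R, -, hφR⟩ := hφc.exists_forall_eq_zero_deriv_eq_zero
  obtain ⟨Kx, hKx⟩ := (continuous_deriv_fst hφ).bounded_above_of_compact_support
    (hasCompactSupport_deriv_fst hφ hφc)
  obtain ⟨Kt, hKt⟩ := (continuous_deriv_snd hφ).bounded_above_of_compact_support
    (hasCompactSupport_deriv_snd hφ hφc)
  set I : ℝ → ℝ := fun t => ∫ x, u x t * φ x t
  set F : ℝ → ℝ := fun t => ∫ x,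
    (u x t * deriv (fun s => φ x s) t + G (u x t) * deriv (fun y => φ y t) x)
  have hI : ∀ t ∈ Ioi 0, HasDerivAt I (F t) t := fun t (ht : 0 < t) => by
    simp only [F, hu _ _ ht]
    exact (hasDerivAt_integral_comp_div_mul hG hv hS hW hφ hφc ht).congr_of_eventuallyEq
      (eventually_of_mem (Ioi_mem_nhds ht) fun t' (ht' : 0 < t') => by simp only [I, hu _ _ ht'])
  have hI0 : ContinuousWithinAt I (Ici 0) 0 := by
    rw [← continuousWithinAt_Ioi_iff_Ici, ContinuousWithinAt]
    simp only [I, hu0, hu₀]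
    exact (tendsto_integral_comp_div_mul_nhdsGT_zero hv hvC hvl hvr hφ.continuous hφc).congr'
      (eventually_nhdsWithin_of_forall fun t (ht : 0 < t) => by simp only [hu _ _ ht])
  have hItop : Tendsto I atTop (𝓝 0) := tendsto_const_nhds.congr' <|
    (eventually_gt_atTop R).mono fun t ht => by
      simp [I, fun x => (hφR x t (Or.inr (ht.trans_le (le_abs_self t)))).1]
  have hFB : ∀ t ∈ Ioi 0, ‖F t‖ ≤ ∫ x, ((closedBall (0 : ℝ) R).indicator (fun _ => C * Kt) x
      + (closedBall 0 R).indicator (fun _ => C * Kx) x) := fun t (ht : 0 < t) => by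
    refine norm_integral_le_of_norm_le ((integrable_indicator_closedBall_const R _).add
      (integrable_indicator_closedBall_const R _)) (ae_of_all _ fun x => ?_)
    refine (norm_add_le _ _).trans (add_le_add ?_ ?_)
    · exact norm_mul_le_indicator_closedBall (fun x => hu x t ht ▸ hvC _) (fun x => hKt (x, t))
        (fun x hx => (hφR x t (Or.inl hx)).2.2) x
    · exact norm_mul_le_indicator_closedBall (fun x => hu x t ht ▸ hGvC _) (fun x => hKx (x, t))
        (fun x hx => (hφR x t (Or.inl hx)).2.1) x
  have hF0 : ∀ t, R < t → F t = 0 := fun t ht => by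
    simp [F, hφR _ t (Or.inr (ht.trans_le (le_abs_self t)))]
  rw [integral_Ioi_of_hasDerivAt_of_tendsto hI0 hI
    (integrableOn_Ioi_of_hasDerivAt_of_norm_le hI hFB hF0) hItop]
  simp [I, hu0]

end SelfSimilar

theorem hasDerivAt_depG (u : ℝ) : HasDerivAt depG (depH u) u := by
  have h := (((hasDerivAt_id u).const_mul 2).mul ((hasDerivAt_id u).const_sub 1)).mul
    (((hasDerivAt_id u).const_mul 2).sub_const 1)
  exact h.congr_deriv (by simp only [id, Pi.mul_apply, depH]; ring)

theorem continuous_depG : Continuous depG :=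
  continuous_iff_continuousAt.2 fun u => (hasDerivAt_depG u).continuousAt

theorem norm_depG_le {u : ℝ} (h0 : 0 ≤ u) (h1 : u ≤ 1 / 2) : ‖depG u‖ ≤ 1 / 2 := by
  rw [Real.norm_eq_abs, abs_le, depG]
  constructor <;>
    nlinarith [mul_nonneg h0 (sub_nonneg.2 h1), mul_nonneg (mul_nonneg h0 h0) (sub_nonneg.2 h1)]

theorem depH_le_one (u : ℝ) : depH u ≤ 1 := by
  unfold depH
  nlinarith [sq_nonneg (u - 1 / 2)]

theorem depH_le_depH {l ρ : ℝ} (hρ : ρ ≤ 1 / 2) (hlρ : l ≤ ρ) : depH l ≤ depH ρ := by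
  unfold depH
  nlinarith

theorem HasDerivAt.mul_sub_depG_comp {v : ℝ → ℝ} {v' s : ℝ} (hv : HasDerivAt v v' s)
    (h : (s - depH (v s)) * v' = 0) :
    HasDerivAt (fun s => s * v s - depG (v s)) (v s) s :=
  (((hasDerivAt_id s).mul hv).sub ((hasDerivAt_depG (v s)).comp s hv)).congr_deriv
    (by simp only [id]; linear_combination h)

/-- The inverse of `depH` on `(-∞, 1/2]`. -/
noncomputable def depHInv (s : ℝ) : ℝ := 1 / 2 - Real.sqrt ((1 - s) / 12)

theorem depHInv_depH {u : ℝ} (hu : u ≤ 1 / 2) : depHInv (depH u) = u := by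
  have h : (1 - depH u) / 12 = (1 / 2 - u) ^ 2 := by unfold depH; ring
  rw [depHInv, h, Real.sqrt_sq (by linarith)]
  ring

theorem depH_depHInv {s : ℝ} (hs : s ≤ 1) : depH (depHInv s) = s := by
  rw [depH, depHInv, sub_sub_cancel_left, neg_sq, Real.sq_sqrt (by linarith)]
  ring

theorem monotone_depHInv : Monotone depHInv := fun s t hst =>
  sub_le_sub_left (Real.sqrt_le_sqrt (by linarith)) _

theorem continuous_depHInv : Continuous depHInv := by
  unfold depHInv
  fun_prop

theorem differentiableAt_depHInv {s : ℝ} (hs : s < 1) : DifferentiableAt ℝ depHInv s := by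
  unfold depHInv
  fun_prop (disch := exact ne_of_gt (by linarith))

noncomputable def fanProfile (l ρ s : ℝ) : ℝ :=
  if s ≤ depH l then l else if s < depH ρ then depHInv s else ρ

section Fan

variable {l ρ : ℝ}

theorem fanProfile_div {x t : ℝ} (ht : 0 < t) :
    fanProfile l ρ (x / t) = if x ≤ depH l * t then l
      else if x < depH ρ * t then 1 / 2 - Real.sqrt ((1 - x / t) / 12) else ρ := by
  simp only [fanProfile, depHInv, div_le_iff₀ ht, div_lt_iff₀ ht]

theorem fanProfile_eq_max_min (hρ : ρ ≤ 1 / 2) (hlρ : l ≤ ρ) (s : ℝ) :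
    fanProfile l ρ s = max l (min ρ (depHInv s)) := by
  have hl : depHInv (depH l) = l := depHInv_depH (hlρ.trans hρ)
  have hρ' : depHInv (depH ρ) = ρ := depHInv_depH hρ
  unfold fanProfile
  split_ifs with h1 h2
  · exact (max_eq_left ((min_le_right _ _).trans (hl ▸ monotone_depHInv h1))).symm
  · rw [min_eq_right (hρ' ▸ monotone_depHInv h2.le),
      max_eq_right (hl ▸ monotone_depHInv (not_le.mp h1).le)]
  · rw [min_eq_left (hρ' ▸ monotone_depHInv (not_lt.mp h2)), max_eq_right hlρ]

theorem continuous_fanProfile (hρ : ρ ≤ 1 / 2) (hlρ : l ≤ ρ) : Continuous (fanProfile l ρ) := by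
  rw [funext (fanProfile_eq_max_min hρ hlρ)]
  exact continuous_const.max (continuous_const.min continuous_depHInv)

theorem fanProfile_mem_Icc (hρ : ρ ≤ 1 / 2) (hlρ : l ≤ ρ) (s : ℝ) : fanProfile l ρ s ∈ Icc l ρ := by
  rw [fanProfile_eq_max_min hρ hlρ]
  exact ⟨le_max_left _ _, max_le hlρ (min_le_left _ _)⟩

theorem tendsto_fanProfile_atBot : Tendsto (fanProfile l ρ) atBot (𝓝 l) :=
  tendsto_const_nhds.congr' <| (eventually_le_atBot (depH l)).mono fun _ hs => (if_pos hs).symm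

theorem tendsto_fanProfile_atTop (hρ : ρ ≤ 1 / 2) (hlρ : l ≤ ρ) :
    Tendsto (fanProfile l ρ) atTop (𝓝 ρ) :=
  tendsto_const_nhds.congr' <| (eventually_gt_atTop (depH ρ)).mono fun _ hs => by
    simp [fanProfile, ((depH_le_depH hρ hlρ).trans_lt hs).not_ge, hs.not_gt]

theorem hasDerivAt_fanPotential (hρ : ρ ≤ 1 / 2) (hlρ : l ≤ ρ) {s : ℝ} (hsl : s ≠ depH l)
    (hsρ : s ≠ depH ρ) :
    HasDerivAt (fun s => s * fanProfile l ρ s - depG (fanProfile l ρ s)) (fanProfile l ρ s) s := by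
  rcases hsl.lt_or_gt with hs | hs
  · have hev : fanProfile l ρ =ᶠ[𝓝 s] fun _ => l :=
      eventually_of_mem (Iio_mem_nhds hs) fun y (hy : y < _) => if_pos hy.le
    exact ((hasDerivAt_const s l).congr_of_eventuallyEq hev).mul_sub_depG_comp (mul_zero _)
  rcases hsρ.lt_or_gt with hs' | hs'
  · have hev : fanProfile l ρ =ᶠ[𝓝 s] depHInv :=
      eventually_of_mem (Ioo_mem_nhds hs hs') fun y hy => by simp [fanProfile, hy.1.not_ge, hy.2]
    have hs1 : s < 1 := hs'.trans_le (depH_le_one ρ)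
    refine ((differentiableAt_depHInv hs1).hasDerivAt.congr_of_eventuallyEq hev
      ).mul_sub_depG_comp ?_
    rw [hev.eq_of_nhds, depH_depHInv hs1.le, sub_self, zero_mul]
  · have hev : fanProfile l ρ =ᶠ[𝓝 s] fun _ => ρ :=
      eventually_of_mem (Ioi_mem_nhds hs') fun y (hy : _ < y) => by
        simp [fanProfile, ((depH_le_depH hρ hlρ).trans_lt hy).not_ge, hy.not_gt]
    exact ((hasDerivAt_const s ρ).congr_of_eventuallyEq hev).mul_sub_depG_comp (mul_zero _)

end Fan

/-- The rarefaction fan is a weak solution of the conservation law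
`∂_t u + ∂_x G(u) = 0` with Riemann initial datum `u₀ = λ·1_{x<0} + ρ·1_{x≥0}`,
for `λ ≤ ρ` both in `[0, 1/2]`. -/
theorem dep_rarefaction_is_weak_solution
    (l ρ : ℝ) (hl : l ∈ Set.Icc (0 : ℝ) (1 / 2)) (hρ : ρ ∈ Set.Icc (0 : ℝ) (1 / 2))
    (hlρ : l ≤ ρ)
    (u₀ : ℝ → ℝ) (hu₀ : ∀ x : ℝ, u₀ x = if x < 0 then l else ρ)
    (u : ℝ → ℝ → ℝ)
    (hu0 : ∀ x : ℝ, u x 0 = u₀ x)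
    (hu : ∀ x t : ℝ, 0 < t → u x t =
      if x ≤ depH l * t then l
      else if x < depH ρ * t then 1 / 2 - Real.sqrt ((1 - x / t) / 12)
      else ρ)
    (φ : ℝ → ℝ → ℝ)
    (hφ : ContDiff ℝ 1 (fun p : ℝ × ℝ => φ p.1 p.2))
    (hφsupp : HasCompactSupport (fun p : ℝ × ℝ => φ p.1 p.2)) :
    (∫ t in Set.Ioi (0 : ℝ), ∫ x : ℝ,
        (u x t * deriv (fun s => φ x s) t
          + depG (u x t) * deriv (fun y => φ y t) x))
      + (∫ x : ℝ, u₀ x * φ x 0) = 0 := by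
  have hmem : ∀ s, fanProfile l ρ s ∈ Icc (0 : ℝ) (1 / 2) := fun s =>
    have h := fanProfile_mem_Icc hρ.2 hlρ s
    ⟨hl.1.trans h.1, h.2.trans hρ.2⟩
  refine isWeakSolution_of_selfSimilar (S := {depH l, depH ρ}) (C := 1 / 2) continuous_depG
    (continuous_fanProfile hρ.2 hlρ)
    (fun s => by rw [Real.norm_eq_abs, abs_of_nonneg (hmem s).1]; exact (hmem s).2)
    (fun s => norm_depG_le (hmem s).1 (hmem s).2) ((countable_singleton _).insert _)
    (fun s hs => hasDerivAt_fanPotential hρ.2 hlρ (fun h => hs (Or.inl h)) (fun h => hs (Or.inr h)))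
    tendsto_fanProfile_atBot (tendsto_fanProfile_atTop hρ.2 hlρ) hu₀ hu0
    (fun x t ht => (hu x t ht).trans (fanProfile_div ht).symm) φ hφ hφsupp
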